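/- Let (Ω,F,P) with filtration (F_j)_{j=0}^m, let (G¹_j) and (G²_j) be adapted integrable processes, and define the multiple stopping value V := sup{ E[G¹_{τ₁} + G²_{τ₂}] : τ₁ ≤ τ₂ stopping times with values in {0,...,m} }. Define J_j := G¹_j + ess sup over stopping times τ₂ ≥ j of E[G²_{τ₂} | F_j] (i.e., J_j = G¹_j + S²_j where S² is the Snell envelope of G² started at j). Then V = sup over stopping times τ₁ of E[J_{τ₁}], and an optimal pair (τ₁*, τ₂*) exists: τ₁* optimal for stopping J, and τ₂* := min{k ≥ τ₁* : S²_k = G²_k}. -/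

import Mathlib

/-!
On `{0, …, m}` the Snell envelope `S` of `G` dominates `G`, satisfies
`E[S_{j+1} | ℱ_j] ≤ S_j`, and is a martingale strictly before it first meets `G`. By optional
sampling between bounded stopping times, every second stop `τ₂ ≥ τ₁` earns at most `E[S_{τ₁}]`,
and the first time after `τ₁` at which `S` meets `G` earns exactly that. So the double stopping
problem reduces to stopping `G¹ + S²` once, which the Snell envelope of `G¹ + S²` solves in the
same way.
-/

open MeasureTheory Finset

section

variable {Ω : Type*} {ℱ : ℕ → MeasurableSpace Ω} {m : ℕ} {σ τ : Ω → ℕ}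

lemma measurableSet_le_of_measurableSet_eq (hmono : Monotone ℱ)
    (hτ : ∀ j, MeasurableSet[ℱ j] {ω | τ ω = j}) (j : ℕ) :
    MeasurableSet[ℱ j] {ω | τ ω ≤ j} := by
  have : {ω | τ ω ≤ j} = ⋃ i, ⋃ (_ : i ≤ j), {ω | τ ω = i} := by ext; simp
  rw [this]
  exact .iUnion fun i => .iUnion fun hij => hmono hij _ (hτ i)

lemma measurableSet_le_and_lt (hmono : Monotone ℱ)
    (hσ : ∀ j, MeasurableSet[ℱ j] {ω | σ ω = j}) (hτ : ∀ j, MeasurableSet[ℱ j] {ω | τ ω = j})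
    (j : ℕ) : MeasurableSet[ℱ j] {ω | σ ω ≤ j ∧ j < τ ω} := by
  have : {ω | σ ω ≤ j ∧ j < τ ω} = {ω | σ ω ≤ j} ∩ {ω | τ ω ≤ j}ᶜ := by ext; simp
  rw [this]
  exact (measurableSet_le_of_measurableSet_eq hmono hσ j).inter
    (measurableSet_le_of_measurableSet_eq hmono hτ j).compl

lemma measurableSet_sInf_eq (hmono : Monotone ℱ) {P : ℕ → Ω → Prop}
    (hP : ∀ k ≤ m, MeasurableSet[ℱ k] {ω | P k ω}) (hPm : ∀ ω, P m ω) (j : ℕ) :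
    MeasurableSet[ℱ j] {ω | sInf {k | P k ω} = j} := by
  by_cases hj : j ≤ m
  · have : {ω | sInf {k | P k ω} = j} = {ω | P j ω} ∩ ⋂ k, ⋂ (_ : k < j), {ω | P k ω}ᶜ := by
      ext ω
      simp only [Set.mem_ofPred_eq, Set.mem_inter_iff, Set.mem_iInter, Set.mem_compl_iff]
      constructor
      · rintro rfl
        exact ⟨Nat.sInf_mem (s := {k | P k ω}) ⟨m, hPm ω⟩, fun k hk => Nat.notMem_of_lt_sInf hk⟩
      · rintro ⟨hPj, hfirst⟩
        exact le_antisymm (Nat.sInf_le hPj)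
          (le_csInf ⟨j, hPj⟩ fun k hPk => not_lt.1 fun hkj => hfirst k hkj hPk)
    rw [this]
    exact (hP j hj).inter <| .iInter fun k => .iInter fun hkj =>
      (hmono hkj.le _ (hP k (by omega))).compl
  · have : {ω | sInf {k | P k ω} = j} = ∅ := by
      ext ω
      have := Nat.sInf_le (s := {k | P k ω}) (hPm ω)
      simp only [Set.mem_ofPred_eq, Set.mem_empty_iff_false, iff_false]
      omega
    rw [this]
    exact @MeasurableSet.empty _ (ℱ j)

lemma stopped_sub_stopped_eq_sum {X : ℕ → Ω → ℝ} (hστ : σ ≤ τ) (hτm : ∀ ω, τ ω ≤ m) (ω : Ω) :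
    X (τ ω) ω - X (σ ω) ω =
      ∑ j ∈ range m, {ω | σ ω ≤ j ∧ j < τ ω}.indicator (fun ω => X (j + 1) ω - X j ω) ω := by
  rw [← sum_Ico_sub (f := fun j => X j ω) (hστ ω)]
  simp only [Set.indicator_apply, Set.mem_ofPred_eq]
  rw [← sum_filter]
  congr 1
  ext j
  simp only [mem_Ico, mem_filter, mem_range]
  have := hτm ω
  omega

noncomputable def snellStoppingTime (G S : ℕ → Ω → ℝ) (σ : Ω → ℕ) (ω : Ω) : ℕ :=
  sInf {k | σ ω ≤ k ∧ S k ω = G k ω}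

variable [m0 : MeasurableSpace Ω] {μ : Measure Ω}

lemma integrable_stopped (hle : ∀ j, ℱ j ≤ m0) (hτm : ∀ ω, τ ω ≤ m)
    (hτ : ∀ j, MeasurableSet[ℱ j] {ω | τ ω = j}) {X : ℕ → Ω → ℝ}
    (hX : ∀ j ≤ m, Integrable (X j) μ) :
    Integrable (fun ω => X (τ ω) ω) μ := by
  have : (fun ω => X (τ ω) ω) = fun ω => ∑ j ∈ range (m + 1), {ω | τ ω = j}.indicator (X j) ω := by
    ext ω
    rw [Finset.sum_eq_single (τ ω)]
    · simp
    · exact fun j _ hj => by simp [Ne.symm hj]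
    · exact fun h => absurd (mem_range.2 (Nat.lt_succ_of_le (hτm ω))) h
  rw [this]
  exact integrable_finsetSum _ fun j hj =>
    (hX j (Nat.lt_succ_iff.1 (mem_range.1 hj))).indicator (hle j _ (hτ j))

section OptionalSampling

variable [IsFiniteMeasure μ] {X : ℕ → Ω → ℝ}

/-- The discrete Doob decomposition, sampled between two bounded stopping times. -/
lemma integral_stopped_sub_stopped (hmono : Monotone ℱ) (hle : ∀ j, ℱ j ≤ m0)
    (hστ : σ ≤ τ) (hτm : ∀ ω, τ ω ≤ m)
    (hσ : ∀ j, MeasurableSet[ℱ j] {ω | σ ω = j}) (hτ : ∀ j, MeasurableSet[ℱ j] {ω | τ ω = j})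
    (hX : ∀ j ≤ m, Integrable (X j) μ) :
    ∫ ω, X (τ ω) ω ∂μ - ∫ ω, X (σ ω) ω ∂μ =
      ∑ j ∈ range m, ∫ ω in {ω | σ ω ≤ j ∧ j < τ ω}, (μ[X (j + 1)|ℱ j] ω - X j ω) ∂μ := by
  have hσm : ∀ ω, σ ω ≤ m := fun ω => (hστ ω).trans (hτm ω)
  have hA := measurableSet_le_and_lt hmono hσ hτ
  have hX' : ∀ j ∈ range m, Integrable (X j) μ ∧ Integrable (X (j + 1)) μ := fun j hj =>
    ⟨hX j (mem_range.1 hj).le, hX (j + 1) (mem_range.1 hj)⟩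
  rw [← integral_sub (integrable_stopped hle hτm hτ hX) (integrable_stopped hle hσm hσ hX)]
  simp_rw [stopped_sub_stopped_eq_sum hστ hτm]
  rw [integral_finsetSum _ fun j hj => by
    exact ((hX' j hj).2.sub (hX' j hj).1).indicator (hle j _ (hA j))]
  refine sum_congr rfl fun j hj => ?_
  rw [integral_indicator (hle j _ (hA j)), integral_sub (hX' j hj).2.integrableOn
    (hX' j hj).1.integrableOn, integral_sub integrable_condExp.integrableOn
    (hX' j hj).1.integrableOn, setIntegral_condExp (hle j) (hX' j hj).2 (hA j)]

lemma integral_stopped_le_of_condExp_le (hmono : Monotone ℱ) (hle : ∀ j, ℱ j ≤ m0)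
    (hστ : σ ≤ τ) (hτm : ∀ ω, τ ω ≤ m)
    (hσ : ∀ j, MeasurableSet[ℱ j] {ω | σ ω = j}) (hτ : ∀ j, MeasurableSet[ℱ j] {ω | τ ω = j})
    (hX : ∀ j ≤ m, Integrable (X j) μ) (hsuper : ∀ j < m, ∀ ω, μ[X (j + 1)|ℱ j] ω ≤ X j ω) :
    ∫ ω, X (τ ω) ω ∂μ ≤ ∫ ω, X (σ ω) ω ∂μ := by
  rw [← sub_nonpos, integral_stopped_sub_stopped hmono hle hστ hτm hσ hτ hX]
  exact sum_nonpos fun j hj => setIntegral_nonpos (hle j _ (measurableSet_le_and_lt hmono hσ hτ j))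
    fun ω _ => sub_nonpos.2 (hsuper j (mem_range.1 hj) ω)

lemma integral_stopped_eq_of_eq_condExp (hmono : Monotone ℱ) (hle : ∀ j, ℱ j ≤ m0)
    (hστ : σ ≤ τ) (hτm : ∀ ω, τ ω ≤ m)
    (hσ : ∀ j, MeasurableSet[ℱ j] {ω | σ ω = j}) (hτ : ∀ j, MeasurableSet[ℱ j] {ω | τ ω = j})
    (hX : ∀ j ≤ m, Integrable (X j) μ)
    (hmart : ∀ j < m, ∀ ω, σ ω ≤ j → j < τ ω → μ[X (j + 1)|ℱ j] ω = X j ω) :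
    ∫ ω, X (τ ω) ω ∂μ = ∫ ω, X (σ ω) ω ∂μ := by
  rw [← sub_eq_zero, integral_stopped_sub_stopped hmono hle hστ hτm hσ hτ hX]
  exact sum_eq_zero fun j hj => setIntegral_eq_zero_of_forall_eq_zero fun ω hω =>
    sub_eq_zero.2 (hmart j (mem_range.1 hj) ω hω.1 hω.2)

end OptionalSampling

structure IsSnellEnvelope (μ : Measure Ω) (ℱ : ℕ → MeasurableSpace Ω) (m : ℕ)
    (G S : ℕ → Ω → ℝ) : Prop where
  terminal : S m = G m
  backward : ∀ j < m, S j = fun ω => max (G j ω) (μ[S (j + 1)|ℱ j] ω)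

noncomputable def snellEnvelope (μ : Measure Ω) (ℱ : ℕ → MeasurableSpace Ω) (m : ℕ)
    (G : ℕ → Ω → ℝ) (j : ℕ) : Ω → ℝ :=
  if m ≤ j then G j else fun ω => max (G j ω) (μ[snellEnvelope μ ℱ m G (j + 1)|ℱ j] ω)
termination_by m - j

lemma isSnellEnvelope_snellEnvelope (μ : Measure Ω) (ℱ : ℕ → MeasurableSpace Ω) (m : ℕ)
    (G : ℕ → Ω → ℝ) : IsSnellEnvelope μ ℱ m G (snellEnvelope μ ℱ m G) where
  terminal := by rw [snellEnvelope, if_pos le_rfl]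
  backward j hj := by rw [snellEnvelope, if_neg (not_le.2 hj)]

namespace IsSnellEnvelope

variable {G S : ℕ → Ω → ℝ}

lemma le (hS : IsSnellEnvelope μ ℱ m G S) {j : ℕ} (hj : j ≤ m) (ω : Ω) : G j ω ≤ S j ω := by
  rcases hj.eq_or_lt with rfl | hj
  · rw [hS.terminal]
  · rw [hS.backward j hj]
    exact le_max_left _ _

lemma condExp_le (hS : IsSnellEnvelope μ ℱ m G S) {j : ℕ} (hj : j < m) (ω : Ω) :
    μ[S (j + 1)|ℱ j] ω ≤ S j ω := by
  rw [hS.backward j hj]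
  exact le_max_right _ _

lemma condExp_eq_of_ne (hS : IsSnellEnvelope μ ℱ m G S) {j : ℕ} (hj : j < m) {ω : Ω}
    (hne : S j ω ≠ G j ω) : μ[S (j + 1)|ℱ j] ω = S j ω := by
  rw [hS.backward j hj] at hne ⊢
  exact ((max_choice _ _).resolve_left hne).symm

lemma stronglyMeasurable (hS : IsSnellEnvelope μ ℱ m G S)
    (hG : ∀ j ≤ m, StronglyMeasurable[ℱ j] (G j)) {j : ℕ} (hj : j ≤ m) :
    StronglyMeasurable[ℱ j] (S j) := by
  rcases hj.eq_or_lt with rfl | hj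
  · exact hS.terminal ▸ hG j le_rfl
  · rw [hS.backward j hj]
    exact @StronglyMeasurable.fun_sup _ _ _ _ (ℱ j) _ _ _ (hG j hj.le) stronglyMeasurable_condExp

lemma integrable (hS : IsSnellEnvelope μ ℱ m G S) (hG : ∀ j ≤ m, Integrable (G j) μ)
    {j : ℕ} (hj : j ≤ m) : Integrable (S j) μ := by
  rcases hj.eq_or_lt with rfl | hj
  · exact hS.terminal ▸ hG j le_rfl
  · rw [hS.backward j hj]
    exact (hG j hj.le).sup integrable_condExp

lemma snellStoppingTime_spec (hS : IsSnellEnvelope μ ℱ m G S) (hσm : ∀ ω, σ ω ≤ m) (ω : Ω) :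
    σ ω ≤ snellStoppingTime G S σ ω ∧
      S (snellStoppingTime G S σ ω) ω = G (snellStoppingTime G S σ ω) ω :=
  Nat.sInf_mem (s := {k | σ ω ≤ k ∧ S k ω = G k ω}) ⟨m, hσm ω, congrFun hS.terminal ω⟩

lemma snellStoppingTime_le (hS : IsSnellEnvelope μ ℱ m G S) (hσm : ∀ ω, σ ω ≤ m) (ω : Ω) :
    snellStoppingTime G S σ ω ≤ m :=
  Nat.sInf_le ⟨hσm ω, congrFun hS.terminal ω⟩

lemma measurableSet_snellStoppingTime_eq (hS : IsSnellEnvelope μ ℱ m G S)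
    (hmono : Monotone ℱ) (hG : ∀ j ≤ m, StronglyMeasurable[ℱ j] (G j)) (hσm : ∀ ω, σ ω ≤ m)
    (hσ : ∀ j, MeasurableSet[ℱ j] {ω | σ ω = j}) (j : ℕ) :
    MeasurableSet[ℱ j] {ω | snellStoppingTime G S σ ω = j} :=
  measurableSet_sInf_eq hmono (fun k hk => (measurableSet_le_of_measurableSet_eq hmono hσ k).inter
    ((hS.stronglyMeasurable hG hk).measurableSet_eq_fun (hG k hk)))
    (fun ω => ⟨hσm ω, congrFun hS.terminal ω⟩) j

variable [IsFiniteMeasure μ]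

lemma integral_stopped_le (hS : IsSnellEnvelope μ ℱ m G S) (hmono : Monotone ℱ)
    (hle : ∀ j, ℱ j ≤ m0) (hG : ∀ j ≤ m, Integrable (G j) μ) (hστ : σ ≤ τ) (hτm : ∀ ω, τ ω ≤ m)
    (hσ : ∀ j, MeasurableSet[ℱ j] {ω | σ ω = j}) (hτ : ∀ j, MeasurableSet[ℱ j] {ω | τ ω = j}) :
    ∫ ω, G (τ ω) ω ∂μ ≤ ∫ ω, S (σ ω) ω ∂μ :=
  calc ∫ ω, G (τ ω) ω ∂μ ≤ ∫ ω, S (τ ω) ω ∂μ :=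
        integral_mono (integrable_stopped hle hτm hτ hG)
          (integrable_stopped hle hτm hτ fun _ => hS.integrable hG) fun ω => hS.le (hτm ω) ω
    _ ≤ ∫ ω, S (σ ω) ω ∂μ :=
        integral_stopped_le_of_condExp_le hmono hle hστ hτm hσ hτ (fun _ => hS.integrable hG)
          fun _ => hS.condExp_le

/-- Strictly before the Snell stopping time `S ≠ G`, so `S` is a martingale there. -/
lemma integral_snellStoppingTime (hS : IsSnellEnvelope μ ℱ m G S) (hmono : Monotone ℱ)
    (hle : ∀ j, ℱ j ≤ m0) (hGm : ∀ j ≤ m, StronglyMeasurable[ℱ j] (G j))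
    (hG : ∀ j ≤ m, Integrable (G j) μ) (hσm : ∀ ω, σ ω ≤ m)
    (hσ : ∀ j, MeasurableSet[ℱ j] {ω | σ ω = j}) :
    ∫ ω, G (snellStoppingTime G S σ ω) ω ∂μ = ∫ ω, S (σ ω) ω ∂μ := by
  set τ := snellStoppingTime G S σ
  have hbefore : ∀ j < m, ∀ ω, σ ω ≤ j → j < τ ω → μ[S (j + 1)|ℱ j] ω = S j ω :=
    fun j hj ω hσj hjτ => hS.condExp_eq_of_ne hj fun hSG =>
      (Nat.sInf_le (show j ∈ {k | σ ω ≤ k ∧ S k ω = G k ω} from ⟨hσj, hSG⟩)).not_gt hjτ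
  calc ∫ ω, G (τ ω) ω ∂μ = ∫ ω, S (τ ω) ω ∂μ :=
        integral_congr_ae (.of_forall fun ω => ((hS.snellStoppingTime_spec hσm ω).2).symm)
    _ = ∫ ω, S (σ ω) ω ∂μ :=
        integral_stopped_eq_of_eq_condExp hmono hle (fun ω => (hS.snellStoppingTime_spec hσm ω).1)
          (hS.snellStoppingTime_le hσm) hσ (hS.measurableSet_snellStoppingTime_eq hmono hGm hσm hσ)
          (fun _ => hS.integrable hG) hbefore

lemma isGreatest_integral_stopped (hS : IsSnellEnvelope μ ℱ m G S) (hmono : Monotone ℱ)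
    (hle : ∀ j, ℱ j ≤ m0) (hGm : ∀ j ≤ m, StronglyMeasurable[ℱ j] (G j))
    (hG : ∀ j ≤ m, Integrable (G j) μ) :
    IsGreatest {x | ∃ τ : Ω → ℕ, (∀ ω, τ ω ≤ m) ∧ (∀ j, MeasurableSet[ℱ j] {ω | τ ω = j}) ∧
        x = ∫ ω, G (τ ω) ω ∂μ}
      (∫ ω, G (snellStoppingTime G S 0 ω) ω ∂μ) := by
  have h0m : ∀ ω, (0 : Ω → ℕ) ω ≤ m := fun _ => Nat.zero_le m
  have h0 : ∀ j, MeasurableSet[ℱ j] {ω | (0 : Ω → ℕ) ω = j} := fun j =>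
    show MeasurableSet[ℱ j] {_ω | 0 = j} from .const _
  refine ⟨⟨_, hS.snellStoppingTime_le h0m, hS.measurableSet_snellStoppingTime_eq hmono hGm h0m h0,
    rfl⟩, ?_⟩
  rintro _ ⟨τ, hτm, hτ, rfl⟩
  rw [hS.integral_snellStoppingTime hmono hle hGm hG h0m h0]
  exact hS.integral_stopped_le hmono hle hG (fun _ => Nat.zero_le _) hτm h0 hτ

end IsSnellEnvelope

section DoubleStopping

variable [IsFiniteMeasure μ] {G1 G2 S : ℕ → Ω → ℝ}

lemma integral_add_snellStoppingTime (hS : IsSnellEnvelope μ ℱ m G2 S) (hmono : Monotone ℱ)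
    (hle : ∀ j, ℱ j ≤ m0) (hG1 : ∀ j ≤ m, Integrable (G1 j) μ)
    (hG2m : ∀ j ≤ m, StronglyMeasurable[ℱ j] (G2 j)) (hG2 : ∀ j ≤ m, Integrable (G2 j) μ)
    (hτm : ∀ ω, τ ω ≤ m) (hτ : ∀ j, MeasurableSet[ℱ j] {ω | τ ω = j}) :
    ∫ ω, (G1 (τ ω) ω + G2 (snellStoppingTime G2 S τ ω) ω) ∂μ =
      ∫ ω, (G1 (τ ω) ω + S (τ ω) ω) ∂μ := by
  rw [integral_add (integrable_stopped hle hτm hτ hG1) (integrable_stopped hle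
      (hS.snellStoppingTime_le hτm) (hS.measurableSet_snellStoppingTime_eq hmono hG2m hτm hτ) hG2),
    integral_add (integrable_stopped hle hτm hτ hG1)
      (integrable_stopped hle hτm hτ fun _ => hS.integrable hG2),
    hS.integral_snellStoppingTime hmono hle hG2m hG2 hτm hτ]

/-- Dynamic programming: an optimal second stopping time after `τ₁` gains exactly `S τ₁`. -/
lemma isGreatest_integral_add_stopped (hS : IsSnellEnvelope μ ℱ m G2 S) (hmono : Monotone ℱ)
    (hle : ∀ j, ℱ j ≤ m0) (hG1 : ∀ j ≤ m, Integrable (G1 j) μ)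
    (hG2m : ∀ j ≤ m, StronglyMeasurable[ℱ j] (G2 j)) (hG2 : ∀ j ≤ m, Integrable (G2 j) μ) {c : ℝ}
    (hc : IsGreatest {x | ∃ τ : Ω → ℕ, (∀ ω, τ ω ≤ m) ∧
      (∀ j, MeasurableSet[ℱ j] {ω | τ ω = j}) ∧ x = ∫ ω, (G1 (τ ω) ω + S (τ ω) ω) ∂μ} c) :
    IsGreatest {x | ∃ τ1 τ2 : Ω → ℕ, (∀ ω, τ1 ω ≤ τ2 ω) ∧ (∀ ω, τ2 ω ≤ m) ∧
      (∀ j, MeasurableSet[ℱ j] {ω | τ1 ω = j}) ∧ (∀ j, MeasurableSet[ℱ j] {ω | τ2 ω = j}) ∧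
      x = ∫ ω, (G1 (τ1 ω) ω + G2 (τ2 ω) ω) ∂μ} c := by
  obtain ⟨⟨τ, hτm, hτ, rfl⟩, hcmax⟩ := hc
  refine ⟨⟨τ, snellStoppingTime G2 S τ, fun ω => (hS.snellStoppingTime_spec hτm ω).1,
    hS.snellStoppingTime_le hτm, hτ, hS.measurableSet_snellStoppingTime_eq hmono hG2m hτm hτ,
    (integral_add_snellStoppingTime hS hmono hle hG1 hG2m hG2 hτm hτ).symm⟩, ?_⟩
  rintro _ ⟨τ1, τ2, h12, hτ2m, hτ1, hτ2, rfl⟩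
  have hτ1m : ∀ ω, τ1 ω ≤ m := fun ω => (h12 ω).trans (hτ2m ω)
  have hG1τ1 := integrable_stopped hle hτ1m hτ1 hG1
  calc ∫ ω, (G1 (τ1 ω) ω + G2 (τ2 ω) ω) ∂μ
      = ∫ ω, G1 (τ1 ω) ω ∂μ + ∫ ω, G2 (τ2 ω) ω ∂μ :=
        integral_add hG1τ1 (integrable_stopped hle hτ2m hτ2 hG2)
    _ ≤ ∫ ω, G1 (τ1 ω) ω ∂μ + ∫ ω, S (τ1 ω) ω ∂μ :=
        add_le_add le_rfl (hS.integral_stopped_le hmono hle hG2 h12 hτ2m hτ1 hτ2)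
    _ = ∫ ω, (G1 (τ1 ω) ω + S (τ1 ω) ω) ∂μ :=
        (integral_add hG1τ1 (integrable_stopped hle hτ1m hτ1 fun _ => hS.integrable hG2)).symm
    _ ≤ ∫ ω, (G1 (τ ω) ω + S (τ ω) ω) ∂μ := hcmax ⟨τ1, hτ1m, hτ1, rfl⟩

end DoubleStopping

end

theorem stmt_18_general {Ω : Type*} [m0 : MeasurableSpace Ω] (μ : Measure Ω) [IsProbabilityMeasure μ]
    (m : ℕ) (ℱ : ℕ → MeasurableSpace Ω) (hmono : Monotone ℱ) (hle : ∀ j, ℱ j ≤ m0)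
    (G1 G2 S2 : ℕ → Ω → ℝ)
    (hG1meas : ∀ j, StronglyMeasurable[ℱ j] (G1 j))
    (hG2meas : ∀ j, StronglyMeasurable[ℱ j] (G2 j))
    (hG1int : ∀ j, Integrable (G1 j) μ) (hG2int : ∀ j, Integrable (G2 j) μ)
    (hS2m : S2 m = G2 m)
    (hS2rec : ∀ j, j < m → S2 j = fun ω => max (G2 j ω) ((μ[S2 (j + 1)|ℱ j]) ω))
    (J : ℕ → Ω → ℝ) (hJ : ∀ j ω, J j ω = G1 j ω + S2 j ω)
    (V : ℝ)
    (hV : V = sSup {x | ∃ τ1 τ2 : Ω → ℕ,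
      (∀ ω, τ1 ω ≤ τ2 ω) ∧ (∀ ω, τ2 ω ≤ m) ∧
      (∀ j, MeasurableSet[ℱ j] {ω | τ1 ω = j}) ∧ (∀ j, MeasurableSet[ℱ j] {ω | τ2 ω = j}) ∧
      x = ∫ ω, (G1 (τ1 ω) ω + G2 (τ2 ω) ω) ∂μ}) :
    V = sSup {x | ∃ τ1 : Ω → ℕ, (∀ ω, τ1 ω ≤ m) ∧
        (∀ j, MeasurableSet[ℱ j] {ω | τ1 ω = j}) ∧ x = ∫ ω, J (τ1 ω) ω ∂μ} ∧
    ∃ τ1s τ2s : Ω → ℕ,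
      (∀ ω, τ1s ω ≤ τ2s ω) ∧ (∀ ω, τ2s ω ≤ m) ∧
      (∀ j, MeasurableSet[ℱ j] {ω | τ1s ω = j}) ∧
      (∀ j, MeasurableSet[ℱ j] {ω | τ2s ω = j}) ∧
      (∀ ω, τ2s ω = sInf {k | τ1s ω ≤ k ∧ S2 k ω = G2 k ω}) ∧
      (∫ ω, J (τ1s ω) ω ∂μ = V) ∧
      (∫ ω, (G1 (τ1s ω) ω + G2 (τ2s ω) ω) ∂μ = V) := by
  obtain rfl : J = fun j ω => G1 j ω + S2 j ω := funext₂ hJ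
  have hS2 : IsSnellEnvelope μ ℱ m G2 S2 := ⟨hS2m, hS2rec⟩
  have hJmeas : ∀ j ≤ m, StronglyMeasurable[ℱ j] fun ω => G1 j ω + S2 j ω := fun j hj =>
    (hG1meas j).add (hS2.stronglyMeasurable (fun j _ => hG2meas j) hj)
  have hJint : ∀ j ≤ m, Integrable (fun ω => G1 j ω + S2 j ω) μ := fun j hj =>
    (hG1int j).add (hS2.integrable (fun j _ => hG2int j) hj)
  have hU := isSnellEnvelope_snellEnvelope μ ℱ m fun j ω => G1 j ω + S2 j ω
  have hJopt := hU.isGreatest_integral_stopped hmono hle hJmeas hJint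
  obtain ⟨τ1s, hτ1sm, hτ1s, hτ1s_eq⟩ := hJopt.1
  have hVJ : V = ∫ ω, (G1 (τ1s ω) ω + S2 (τ1s ω) ω) ∂μ := by
    rw [hV, (isGreatest_integral_add_stopped hS2 hmono hle (fun j _ => hG1int j)
      (fun j _ => hG2meas j) (fun j _ => hG2int j) hJopt).csSup_eq, hτ1s_eq]
  refine ⟨hVJ.trans (hτ1s_eq.symm.trans hJopt.csSup_eq.symm), τ1s, snellStoppingTime G2 S2 τ1s,
    fun ω => (hS2.snellStoppingTime_spec hτ1sm ω).1, hS2.snellStoppingTime_le hτ1sm, hτ1s,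
    hS2.measurableSet_snellStoppingTime_eq hmono (fun j _ => hG2meas j) hτ1sm hτ1s,
    fun _ => rfl, hVJ.symm, ?_⟩
  rw [integral_add_snellStoppingTime hS2 hmono hle (fun j _ => hG1int j) (fun j _ => hG2meas j)
    (fun j _ => hG2int j) hτ1sm hτ1s, hVJ]

theorem stmt_18 {Ω : Type*} [m0 : MeasurableSpace Ω] (μ : Measure Ω) [IsProbabilityMeasure μ]
    (m : ℕ) (ℱ : ℕ → MeasurableSpace Ω) (hmono : Monotone ℱ) (hle : ∀ j, ℱ j ≤ m0)
    (G1 G2 S2 : ℕ → Ω → ℝ)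
    (hG1meas : ∀ j, StronglyMeasurable[ℱ j] (G1 j))
    (hG2meas : ∀ j, StronglyMeasurable[ℱ j] (G2 j))
    (hG1int : ∀ j, Integrable (G1 j) μ) (hG2int : ∀ j, Integrable (G2 j) μ)
    (hS2int : ∀ j, Integrable (S2 j) μ)
    (hS2m : S2 m = G2 m)
    (hS2rec : ∀ j, j < m → S2 j = fun ω => max (G2 j ω) ((μ[S2 (j + 1)|ℱ j]) ω))
    (J : ℕ → Ω → ℝ) (hJ : ∀ j ω, J j ω = G1 j ω + S2 j ω)
    (V : ℝ)
    (hV : V = sSup {x | ∃ τ1 τ2 : Ω → ℕ,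
      (∀ ω, τ1 ω ≤ τ2 ω) ∧ (∀ ω, τ2 ω ≤ m) ∧
      (∀ j, MeasurableSet[ℱ j] {ω | τ1 ω = j}) ∧ (∀ j, MeasurableSet[ℱ j] {ω | τ2 ω = j}) ∧
      x = ∫ ω, (G1 (τ1 ω) ω + G2 (τ2 ω) ω) ∂μ}) :
    V = sSup {x | ∃ τ1 : Ω → ℕ, (∀ ω, τ1 ω ≤ m) ∧
        (∀ j, MeasurableSet[ℱ j] {ω | τ1 ω = j}) ∧ x = ∫ ω, J (τ1 ω) ω ∂μ} ∧
    ∃ τ1s τ2s : Ω → ℕ,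
      (∀ ω, τ1s ω ≤ τ2s ω) ∧ (∀ ω, τ2s ω ≤ m) ∧
      (∀ j, MeasurableSet[ℱ j] {ω | τ1s ω = j}) ∧
      (∀ j, MeasurableSet[ℱ j] {ω | τ2s ω = j}) ∧
      (∀ ω, τ2s ω = sInf {k | τ1s ω ≤ k ∧ S2 k ω = G2 k ω}) ∧
      (∫ ω, J (τ1s ω) ω ∂μ = V) ∧
      (∫ ω, (G1 (τ1s ω) ω + G2 (τ2s ω) ω) ∂μ = V) :=
  stmt_18_general (m0 := m0) μ m ℱ hmono hle G1 G2 S2 hG1meas hG2meas hG1int hG2int hS2m hS2rec J hJ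
    V hV
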